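/- arXiv:2503.01500 — 2 statements merged into one kernel-verified Lean document; each statement's English description precedes it below -/
import Mathlib

section
/- For all integers p, q and r with 2 ≤ p ≤ q < r ≤ 2q: every finite connected simple graph G with ind-match(G) = p, min-match(G) = q and match(G) = r has at least 2r − 1 edges. -/
variable {V : Type*}

/-- A matching of `G`: a set of edges of `G` that are pairwise disjoint. -/
def IsMatchingSet (G : SimpleGraph V) (M : Set (Sym2 V)) : Prop :=
  (∀ e ∈ M, e ∈ G.edgeSet) ∧
    ∀ e ∈ M, ∀ f ∈ M, e ≠ f → ∀ v : V, v ∈ e → v ∉ f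

/-- A maximal matching of `G`: a matching `M` such that `M ∪ {e}` is not a matching
for every edge `e` of `G` not in `M`. -/
def IsMaximalMatchingSet (G : SimpleGraph V) (M : Set (Sym2 V)) : Prop :=
  IsMatchingSet G M ∧
    ∀ e ∈ G.edgeSet, e ∉ M → ¬ IsMatchingSet G (insert e M)

/-- An induced matching of `G`: a matching `M` such that no edge of `G` meets
two distinct edges of `M`. -/
def IsInducedMatchingSet (G : SimpleGraph V) (M : Set (Sym2 V)) : Prop :=
  IsMatchingSet G M ∧
    ∀ e ∈ M, ∀ f ∈ M, e ≠ f → ∀ g ∈ G.edgeSet,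
      ¬ ((∃ v : V, v ∈ g ∧ v ∈ e) ∧ (∃ v : V, v ∈ g ∧ v ∈ f))

/-- The matching number of `G`: the maximum size of a matching. -/
noncomputable def matchNum (G : SimpleGraph V) : ℕ :=
  sSup {n | ∃ M : Set (Sym2 V), IsMatchingSet G M ∧ M.ncard = n}

/-- The minimum matching number of `G`: the minimum size of a maximal matching. -/
noncomputable def minMatchNum (G : SimpleGraph V) : ℕ :=
  sInf {n | ∃ M : Set (Sym2 V), IsMaximalMatchingSet G M ∧ M.ncard = n}

/-- The induced matching number of `G`: the maximum size of an induced matching. -/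
noncomputable def indMatchNum (G : SimpleGraph V) : ℕ :=
  sSup {n | ∃ M : Set (Sym2 V), IsInducedMatchingSet G M ∧ M.ncard = n}

namespace IsMatchingSet

variable {G : SimpleGraph V} {M : Set (Sym2 V)}

lemma pairwiseDisjoint_toFinset [DecidableEq V] (hM : IsMatchingSet G M) :
    M.PairwiseDisjoint Sym2.toFinset :=
  fun e he f hf hef => Finset.disjoint_left.mpr fun v hve hvf =>
    hM.2 e he f hf hef v (Sym2.mem_toFinset.mp hve) (Sym2.mem_toFinset.mp hvf)

lemma two_mul_ncard_le_card [Fintype V] (hM : IsMatchingSet G M) :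
    2 * M.ncard ≤ Fintype.card V := by
  classical
  have hfin : M.Finite := Set.toFinite M
  have hcover : ∑ e ∈ hfin.toFinset, e.toFinset.card = 2 * M.ncard := by
    rw [Set.ncard_eq_toFinset_card M hfin, mul_comm, ← smul_eq_mul, ← Finset.sum_const]
    refine Finset.sum_congr rfl fun e he => Sym2.card_toFinset_of_not_isDiag e ?_
    exact G.not_isDiag_of_mem_edgeSet (hM.1 e (hfin.mem_toFinset.mp he))
  rw [← hcover, ← Finset.card_biUnion (by simpa using hM.pairwiseDisjoint_toFinset)]
  exact Finset.card_le_univ _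

end IsMatchingSet

lemma exists_isMatchingSet_ncard_eq_matchNum [Finite V] (G : SimpleGraph V) :
    ∃ M : Set (Sym2 V), IsMatchingSet G M ∧ M.ncard = matchNum G := by
  let S := {n | ∃ M : Set (Sym2 V), IsMatchingSet G M ∧ M.ncard = n}
  have hne : S.Nonempty := ⟨0, ∅, ⟨by simp, by simp⟩, by simp⟩
  have hbdd : BddAbove S := by
    refine ⟨G.edgeSet.ncard, ?_⟩
    rintro n ⟨M, hM, rfl⟩
    exact Set.ncard_le_ncard hM.1 (Set.toFinite _)
  exact Nat.sSup_mem hne hbdd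

/-- A maximum matching covers `2 r` vertices, and a connected graph on `n` vertices
has at least `n - 1` edges. -/
theorem stmt_4_general (r : ℕ)
    (V : Type) [Fintype V] (G : SimpleGraph V) (hconn : G.Connected)
    (hmatch : matchNum G = r) :
    2 * r - 1 ≤ G.edgeSet.ncard := by
  obtain ⟨M, hM, hMcard⟩ := exists_isMatchingSet_ncard_eq_matchNum G
  have hcover := hM.two_mul_ncard_le_card
  have htree := hconn.card_vert_le_card_edgeSet_add_one
  rw [Nat.card_eq_fintype_card, Nat.card_coe_set_eq] at htree
  omega

theorem stmt_4 (p q r : ℕ) (hp : 2 ≤ p) (hpq : p ≤ q) (hqr : q < r) (hr2q : r ≤ 2 * q)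
    (V : Type) [Fintype V] (G : SimpleGraph V) (hconn : G.Connected)
    (hind : indMatchNum G = p) (hmin : minMatchNum G = q) (hmatch : matchNum G = r) :
    2 * r - 1 ≤ G.edgeSet.ncard :=
  stmt_4_general r V G hconn hmatch
end

section
/- For every integer q ≥ 3 there exists a finite connected simple graph G with ind-match(G) = 1, min-match(G) = q, match(G) = q + 1, and at most q² + 2 edges. -/
variable {V : Type*}

/-!
The graph is `K_{q,q}` with one pendant edge hung at a vertex of each side. Of two distinct
edges one meets each side, and the biclique edge between those vertices joins them, so there is
no induced matching of size two. A maximal matching leaves no biclique edge free, so it saturates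
a whole side and has at least `q` edges, while the perfect matching of `K_{q,q}` is already
maximal. A side together with the neighbour of the other pendant covers every edge, which bounds
matchings by `q + 1`, and the two pendant edges extend `q - 1` biclique edges to such a matching.
-/

open SimpleGraph

section Matchings

variable {V : Type*} {G : SimpleGraph V} {M : Set (Sym2 V)}

lemma IsMatchingSet.ncard_le_of_cover {T : Set V} (hM : IsMatchingSet G M) (hT : T.Finite)
    (hcover : ∀ e ∈ G.edgeSet, ∃ v ∈ e, v ∈ T) : M.ncard ≤ T.ncard := by
  obtain rfl | ⟨e, he⟩ := M.eq_empty_or_nonempty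
  · simp
  have : Nonempty V := ⟨(hcover e (hM.1 e he)).choose⟩
  choose! f hfe hfT using fun e (he : e ∈ M) => hcover e (hM.1 e he)
  refine Set.ncard_le_ncard_of_injOn f hfT (fun e he e' he' hee' => ?_) hT
  by_contra hne
  exact hM.2 e he e' he' hne (f e) (hfe e he) (hee' ▸ hfe e' he')

lemma ncard_le_ncard_of_isIndepSet {S : Set V} (hME : M ⊆ G.edgeSet) (hMfin : M.Finite)
    (hS : G.IsIndepSet S) (hcover : ∀ v ∈ S, ∃ e ∈ M, v ∈ e) : S.ncard ≤ M.ncard := by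
  obtain rfl | ⟨v, -⟩ := S.eq_empty_or_nonempty
  · simp
  have : Nonempty (Sym2 V) := ⟨s(v, v)⟩
  choose! f hfM hvf using hcover
  refine Set.ncard_le_ncard_of_injOn f hfM (fun u hu w hw huw => ?_) hMfin
  by_contra hne
  have hfu : f u = s(u, w) := (Sym2.mem_and_mem_iff hne).1 ⟨hvf u hu, huw ▸ hvf w hw⟩
  exact hS hu hw hne (G.mem_edgeSet.1 (hfu ▸ hME (hfM u hu)))

lemma IsMaximalMatchingSet.exists_mem_of_adj (hM : IsMaximalMatchingSet G M) {u v : V}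
    (huv : G.Adj u v) : ∃ e ∈ M, u ∈ e ∨ v ∈ e := by
  by_contra! hfree
  refine hM.2 s(u, v) huv (fun h => (hfree _ h).1 (Sym2.mem_mk_left u v)) ⟨?_, ?_⟩
  · rintro e (rfl | he)
    exacts [huv, hM.1.1 e he]
  · rintro e (rfl | he) f (rfl | hf) hne w hwe hwf
    · exact hne rfl
    · rcases Sym2.mem_iff.1 hwe with rfl | rfl
      exacts [(hfree f hf).1 hwf, (hfree f hf).2 hwf]
    · rcases Sym2.mem_iff.1 hwf with rfl | rfl
      exacts [(hfree e he).1 hwe, (hfree e he).2 hwe]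
    · exact hM.1.2 e he f hf hne w hwe hwf

lemma IsMatchingSet.isMaximalMatchingSet (hM : IsMatchingSet G M)
    (hcover : ∀ e ∈ G.edgeSet, ∃ v ∈ e, ∃ f ∈ M, v ∈ f) : IsMaximalMatchingSet G M := by
  refine ⟨hM, fun e he heM hins => ?_⟩
  obtain ⟨v, hve, f, hf, hvf⟩ := hcover e he
  exact hins.2 e (Set.mem_insert e M) f (Set.mem_insert_of_mem e hf)
    (fun h => heM (h ▸ hf)) v hve hvf

lemma IsMaximalMatchingSet.min_ncard_le {A B : Set V} (hM : IsMaximalMatchingSet G M)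
    (hMfin : M.Finite) (hA : G.IsIndepSet A) (hB : G.IsIndepSet B)
    (hAB : ∀ a ∈ A, ∀ b ∈ B, G.Adj a b) : min A.ncard B.ncard ≤ M.ncard := by
  have hsat : (∀ a ∈ A, ∃ e ∈ M, a ∈ e) ∨ ∀ b ∈ B, ∃ e ∈ M, b ∈ e := by
    by_contra! h
    obtain ⟨⟨a, ha, hfa⟩, b, hb, hfb⟩ := h
    obtain ⟨e, he, hae | hbe⟩ := hM.exists_mem_of_adj (hAB a ha b hb)
    exacts [hfa e he hae, hfb e he hbe]
  rcases hsat with hsat | hsat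
  · exact (min_le_left _ _).trans (ncard_le_ncard_of_isIndepSet hM.1.1 hMfin hA hsat)
  · exact (min_le_right _ _).trans (ncard_le_ncard_of_isIndepSet hM.1.1 hMfin hB hsat)

lemma isMatchingSet_range {ι : Type*} {a b : ι → V} (hadj : ∀ i, G.Adj (a i) (b i))
    (hdisj : ∀ i j, i ≠ j → a i ≠ a j ∧ a i ≠ b j ∧ b i ≠ b j) :
    IsMatchingSet G (Set.range fun i => s(a i, b i)) := by
  refine ⟨by rintro _ ⟨i, rfl⟩; exact hadj i, ?_⟩
  rintro _ ⟨i, rfl⟩ _ ⟨j, rfl⟩ hne v hvi hvj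
  have hij : i ≠ j := fun h => hne (h ▸ rfl)
  obtain ⟨h1, h2, h3⟩ := hdisj i j hij
  have h4 := (hdisj j i hij.symm).2.1
  rcases Sym2.mem_iff.1 hvi with rfl | rfl <;> rcases Sym2.mem_iff.1 hvj with h | h <;>
    simp_all

lemma ncard_range_sym2 {ι : Type*} [Finite ι] {a b : ι → V}
    (hdisj : ∀ i j, i ≠ j → a i ≠ a j ∧ a i ≠ b j) :
    (Set.range fun i => s(a i, b i)).ncard = Nat.card ι := by
  refine Set.ncard_range_of_injective fun i j hij => ?_
  by_contra hne
  rcases Sym2.eq_iff.1 hij with ⟨h, -⟩ | ⟨h, -⟩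
  exacts [(hdisj i j hne).1 h, (hdisj i j hne).2 h]

lemma IsInducedMatchingSet.subsingleton (hM : IsInducedMatchingSet G M)
    (hjoin : ∀ e ∈ G.edgeSet, ∀ f ∈ G.edgeSet, e ≠ f → ∃ u ∈ e, ∃ w ∈ f, G.Adj u w) :
    M.Subsingleton := by
  intro e he f hf
  by_contra hne
  obtain ⟨u, hue, w, hwf, huw⟩ := hjoin e (hM.1.1 e he) f (hM.1.1 f hf) hne
  exact hM.2 e he f hf hne s(u, w) huw
    ⟨⟨u, Sym2.mem_mk_left u w, hue⟩, w, Sym2.mem_mk_right u w, hwf⟩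

lemma indMatchNum_eq_one (hE : G.edgeSet.Nonempty)
    (hjoin : ∀ e ∈ G.edgeSet, ∀ f ∈ G.edgeSet, e ≠ f → ∃ u ∈ e, ∃ w ∈ f, G.Adj u w) :
    indMatchNum G = 1 := by
  obtain ⟨e, he⟩ := hE
  refine IsGreatest.csSup_eq ⟨⟨{e}, ⟨⟨?_, ?_⟩, ?_⟩, Set.ncard_singleton e⟩, ?_⟩
  · rintro _ rfl
    exact he
  · rintro _ rfl _ rfl hne
    exact absurd rfl hne
  · rintro _ rfl _ rfl hne
    exact absurd rfl hne
  · rintro _ ⟨M, hM, rfl⟩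
    have hsub := hM.subsingleton hjoin
    exact (Set.ncard_le_one hsub.finite).2 fun a ha b hb => hsub ha hb

end Matchings

namespace bicliqueWithPendants

def side (q a : ℕ) : Set (Fin (2 * q + 2)) := {v | a ≤ v.val ∧ v.val < a + q}

/-- `K_{q,q}` between `side q 0` and `side q q`, and the pendant vertices `2q` at `0` and
`2q+1` at `q`. -/
def arcs (q : ℕ) : Set (Fin (2 * q + 2) × Fin (2 * q + 2)) :=
  side q 0 ×ˢ side q q ∪
    {(⟨2 * q, by omega⟩, ⟨0, by omega⟩), (⟨2 * q + 1, by omega⟩, ⟨q, by omega⟩)}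

end bicliqueWithPendants

def bicliqueWithPendants (q : ℕ) : SimpleGraph (Fin (2 * q + 2)) :=
  SimpleGraph.fromRel fun u v => (u, v) ∈ bicliqueWithPendants.arcs q

namespace bicliqueWithPendants

variable {q : ℕ}

lemma adj_iff {u v : Fin (2 * q + 2)} :
    (bicliqueWithPendants q).Adj u v ↔ u.val ≠ v.val ∧
      ((u.val < q ∧ q ≤ v.val ∧ v.val < 2 * q) ∨ (u.val = 2 * q ∧ v.val = 0) ∨
        (u.val = 2 * q + 1 ∧ v.val = q) ∨ (v.val < q ∧ q ≤ u.val ∧ u.val < 2 * q) ∨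
        (v.val = 2 * q ∧ u.val = 0) ∨ (v.val = 2 * q + 1 ∧ u.val = q)) := by
  simp only [bicliqueWithPendants, arcs, side, fromRel_adj, Fin.ne_iff_vne, Set.mem_union,
    Set.mem_prod, Set.mem_ofPred_eq, Set.mem_insert_iff, Set.mem_singleton_iff, Prod.ext_iff,
    Fin.ext_iff]
  omega

lemma ncard_side {a : ℕ} (ha : a + q ≤ 2 * q + 2) : (side q a).ncard = q := by
  have himage : Fin.val '' side q a = Set.Ico a (a + q) := by
    ext m
    simp only [side, Set.mem_image, Set.mem_ofPred_eq, Set.mem_Ico]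
    exact ⟨by rintro ⟨v, hv, rfl⟩; exact hv, fun hm => ⟨⟨m, by omega⟩, hm, rfl⟩⟩
  rw [← Set.ncard_image_of_injective _ Fin.val_injective, himage, Set.ncard_Ico_nat,
    Nat.add_sub_cancel_left]

lemma isIndepSet_side {a : ℕ} (ha : a = 0 ∨ a = q) :
    (bicliqueWithPendants q).IsIndepSet (side q a) := by
  intro u hu w hw _
  simp only [side, Set.mem_ofPred_eq] at hu hw
  rw [adj_iff]
  omega

lemma adj_of_mem_side {u w : Fin (2 * q + 2)} (hu : u ∈ side q 0) (hw : w ∈ side q q) :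
    (bicliqueWithPendants q).Adj u w := by
  simp only [side, Set.mem_ofPred_eq] at hu hw
  rw [adj_iff]
  omega

lemma exists_mem_side_of_ne {e f : Sym2 (Fin (2 * q + 2))}
    (he : e ∈ (bicliqueWithPendants q).edgeSet) (hf : f ∈ (bicliqueWithPendants q).edgeSet)
    (hef : e ≠ f) :
    ((∃ u ∈ e, u ∈ side q 0) ∧ ∃ w ∈ f, w ∈ side q q) ∨
      ((∃ u ∈ f, u ∈ side q 0) ∧ ∃ w ∈ e, w ∈ side q q) := by
  induction e using Sym2.ind with
  | h a b =>
  induction f using Sym2.ind with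
  | h c d =>
    rw [mem_edgeSet, adj_iff] at he hf
    rw [Ne, Sym2.eq_iff, Fin.ext_iff, Fin.ext_iff, Fin.ext_iff, Fin.ext_iff] at hef
    simp only [side, Set.mem_ofPred_eq, Sym2.mem_iff, exists_eq_or_imp, exists_eq_left]
    omega

lemma exists_adj_of_ne {e f : Sym2 (Fin (2 * q + 2))}
    (he : e ∈ (bicliqueWithPendants q).edgeSet) (hf : f ∈ (bicliqueWithPendants q).edgeSet)
    (hef : e ≠ f) : ∃ u ∈ e, ∃ w ∈ f, (bicliqueWithPendants q).Adj u w := by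
  rcases exists_mem_side_of_ne he hf hef with
    ⟨⟨u, hue, hu⟩, w, hwf, hw⟩ | ⟨⟨u, huf, hu⟩, w, hwe, hw⟩
  · exact ⟨u, hue, w, hwf, adj_of_mem_side hu hw⟩
  · exact ⟨w, hwe, u, huf, (adj_of_mem_side hu hw).symm⟩

lemma exists_mem_val_lt (hq : 0 < q) {e : Sym2 (Fin (2 * q + 2))}
    (he : e ∈ (bicliqueWithPendants q).edgeSet) : ∃ v ∈ e, v.val < 2 * q := by
  induction e using Sym2.ind with
  | h a b =>
    rw [mem_edgeSet, adj_iff] at he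
    simp only [Sym2.mem_iff, exists_eq_or_imp, exists_eq_left]
    omega

lemma exists_mem_insert_side {e : Sym2 (Fin (2 * q + 2))}
    (he : e ∈ (bicliqueWithPendants q).edgeSet) :
    ∃ v ∈ e, v ∈ insert ⟨q, by omega⟩ (side q 0) := by
  induction e using Sym2.ind with
  | h a b =>
    rw [mem_edgeSet, adj_iff] at he
    simp only [Sym2.mem_iff, exists_eq_or_imp, exists_eq_left]
    simp only [side, Set.mem_insert_iff, Set.mem_ofPred_eq, Fin.ext_iff]
    omega

lemma connected (hq : 0 < q) : (bicliqueWithPendants q).Connected := by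
  have hmid : (bicliqueWithPendants q).Adj ⟨0, by omega⟩ ⟨q, by omega⟩ :=
    adj_of_mem_side (by simp [side, hq]) (by simp [side, hq])
  refine (connected_iff_exists_forall_reachable _).2 ⟨⟨q, by omega⟩, fun v => ?_⟩
  have hv : v = ⟨q, by omega⟩ ∨ (bicliqueWithPendants q).Adj v ⟨q, by omega⟩ ∨
      (bicliqueWithPendants q).Adj v ⟨0, by omega⟩ := by
    simp only [adj_iff, Fin.ext_iff, and_true]
    omega
  rcases hv with rfl | hvq | hv0
  exacts [Reachable.refl _, hvq.reachable.symm, (hv0.reachable.trans hmid.reachable).symm]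

lemma ncard_edgeSet_le : (bicliqueWithPendants q).edgeSet.ncard ≤ q ^ 2 + 2 := by
  have hsub : (bicliqueWithPendants q).edgeSet ⊆ Sym2.mk.uncurry '' arcs q := by
    intro e he
    induction e using Sym2.ind with
    | h a b =>
      rcases he.2 with hab | hba
      exacts [⟨_, hab, rfl⟩, ⟨_, hba, Sym2.eq_swap⟩]
  calc (bicliqueWithPendants q).edgeSet.ncard ≤ (arcs q).ncard :=
        (Set.ncard_le_ncard hsub (Set.toFinite _)).trans (Set.ncard_image_le (Set.toFinite _))
    _ ≤ (side q 0 ×ˢ side q q).ncard + 2 :=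
        (Set.ncard_union_le _ _).trans
          (Nat.add_le_add_left ((Set.ncard_insert_le _ _).trans (by rw [Set.ncard_singleton])) _)
    _ = q ^ 2 + 2 := by rw [Set.ncard_prod, ncard_side (by omega), ncard_side (by omega), sq]

lemma indMatchNum_eq (hq : 0 < q) : indMatchNum (bicliqueWithPendants q) = 1 :=
  indMatchNum_eq_one ⟨s(⟨0, by omega⟩, ⟨q, by omega⟩),
      adj_of_mem_side (by simp [side, hq]) (by simp [side, hq])⟩
    fun _ he _ hf => exists_adj_of_ne he hf

lemma matchNum_eq : matchNum (bicliqueWithPendants q) = q + 1 := by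
  -- the edges `{0, 2q}`, `{2q+1, q}` and `{k, q+k}` for `0 < k < q`
  let a : Fin (q + 1) → Fin (2 * q + 2) := fun k =>
    ⟨if k.val = q then 2 * q + 1 else k, by split_ifs <;> omega⟩
  let b : Fin (q + 1) → Fin (2 * q + 2) := fun k =>
    ⟨if k.val = 0 then 2 * q else if k.val = q then q else q + k, by split_ifs <;> omega⟩
  have hdisj : ∀ i j, i ≠ j → a i ≠ a j ∧ a i ≠ b j ∧ b i ≠ b j := by
    intro i j hij
    simp only [a, b, Ne, Fin.ext_iff] at hij ⊢
    split_ifs <;> omega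
  refine IsGreatest.csSup_eq
    ⟨⟨_, isMatchingSet_range (a := a) (b := b) (fun k => ?_) hdisj, ?_⟩, ?_⟩
  · rw [adj_iff]
    simp only [a, b]
    split_ifs <;> omega
  · rw [ncard_range_sym2 fun i j hij => (hdisj i j hij).imp_right And.left, Nat.card_fin]
  · rintro _ ⟨M, hM, rfl⟩
    calc M.ncard ≤ (insert ⟨q, by omega⟩ (side q 0)).ncard :=
          hM.ncard_le_of_cover (Set.toFinite _) fun _ => exists_mem_insert_side
      _ ≤ q + 1 := (Set.ncard_insert_le _ _).trans (by rw [ncard_side (by omega)])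

def bicliqueMatching (q : ℕ) : Set (Sym2 (Fin (2 * q + 2))) :=
  Set.range fun i : Fin q => s(⟨i, by omega⟩, ⟨q + i, by omega⟩)

lemma ncard_bicliqueMatching : (bicliqueMatching q).ncard = q :=
  (ncard_range_sym2 fun i j hij => by simp only [Ne, Fin.ext_iff] at hij ⊢; omega).trans
    (Nat.card_fin q)

lemma isMaximalMatchingSet_bicliqueMatching (hq : 0 < q) :
    IsMaximalMatchingSet (bicliqueWithPendants q) (bicliqueMatching q) := by
  have hM : IsMatchingSet (bicliqueWithPendants q) (bicliqueMatching q) :=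
    isMatchingSet_range (fun i => adj_of_mem_side (by simp [side]) (by simp [side]))
      fun i j hij => by simp only [Ne, Fin.ext_iff] at hij ⊢; omega
  refine hM.isMaximalMatchingSet fun e he => ?_
  obtain ⟨v, hve, hv⟩ := exists_mem_val_lt hq he
  refine ⟨v, hve, ?_⟩
  by_cases h : v.val < q
  · exact ⟨_, ⟨⟨v.val, h⟩, rfl⟩, Sym2.mem_mk_left _ _⟩
  · refine ⟨_, ⟨⟨v.val - q, by omega⟩, rfl⟩, Sym2.mem_iff.2 (Or.inr (Fin.ext ?_))⟩
    dsimp only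
    omega

lemma minMatchNum_eq (hq : 0 < q) : minMatchNum (bicliqueWithPendants q) = q := by
  refine IsLeast.csInf_eq
    ⟨⟨_, isMaximalMatchingSet_bicliqueMatching hq, ncard_bicliqueMatching⟩, ?_⟩
  rintro _ ⟨M, hM, rfl⟩
  have := hM.min_ncard_le (Set.toFinite M) (isIndepSet_side (Or.inl rfl))
    (isIndepSet_side (Or.inr rfl)) fun _ ha _ hb => adj_of_mem_side ha hb
  rwa [ncard_side (by omega), ncard_side (by omega), min_self] at this

end bicliqueWithPendants

theorem stmt_11 (q : ℕ) (hq : 3 ≤ q) :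
    ∃ (n : ℕ) (G : SimpleGraph (Fin n)), G.Connected ∧
      indMatchNum G = 1 ∧ minMatchNum G = q ∧ matchNum G = q + 1 ∧
      G.edgeSet.ncard ≤ q ^ 2 + 2 := by
  have hq : 0 < q := by omega
  exact ⟨2 * q + 2, bicliqueWithPendants q, bicliqueWithPendants.connected hq,
    bicliqueWithPendants.indMatchNum_eq hq, bicliqueWithPendants.minMatchNum_eq hq,
    bicliqueWithPendants.matchNum_eq, bicliqueWithPendants.ncard_edgeSet_le⟩
end
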